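/- arXiv:1708.08751 — 2 statements merged into one kernel-verified Lean document; each statement's English description precedes it below -/
import Mathlib

section
/- Let {f_n}_{n=1}^N be vectors in C^d with frame matrix F having upper frame bound C. For any matrix X ∈ C^{d×d} (not necessarily Hermitian), the sum over n of |f_n^* X f_n| is at most C times the nuclear norm of X. Moreover the constant C is optimal: it is achieved when X = v v^* for v an eigenvector of F F^* corresponding to its largest eigenvalue. -/
open Matrix BigOperators

/-- The nuclear norm of a square complex matrix: the sum of its singular values,
i.e. the square roots of the eigenvalues of `X * Xᴴ`. -/
noncomputable def nuclearNorm {d : ℕ} (X : Matrix (Fin d) (Fin d) ℂ) : ℝ :=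
  ∑ i, Real.sqrt ((Matrix.isHermitian_mul_conjTranspose_self X).eigenvalues i)

section Helpers

variable {d N : ℕ}

lemma dot_star_self_eq (x : Fin d → ℂ) :
    star x ⬝ᵥ x = (↑(∑ i, ‖x i‖ ^ 2) : ℂ) := by
  push_cast
  simp only [dotProduct, Pi.star_apply, RCLike.star_def]
  exact Finset.sum_congr rfl fun i _ => by
    rw [← Complex.ofReal_pow, Complex.sq_norm, Complex.normSq_eq_conj_mul_self]

lemma frameA (F : Matrix (Fin d) (Fin N) ℂ) (u : Fin d → ℂ) :
    (↑(∑ n, ‖star u ⬝ᵥ fun i => F i n‖ ^ 2) : ℂ) =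
      star u ⬝ᵥ (F * Fᴴ) *ᵥ u := by
  rw [← mulVec_mulVec, dotProduct_mulVec]
  push_cast
  rw [dotProduct]
  refine Finset.sum_congr rfl fun n _ => ?_
  have h1 : vecMul (star u) F n = star u ⬝ᵥ fun i => F i n := by
    simp [vecMul, dotProduct]
  have h2 : (Fᴴ *ᵥ u) n = starRingEnd ℂ (star u ⬝ᵥ fun i => F i n) := by
    simp [mulVec, dotProduct, conjTranspose_apply, map_sum, mul_comm]
  rw [h1, h2, ← Complex.ofReal_pow, Complex.sq_norm, Complex.mul_conj]

lemma rayleigh {G : Matrix (Fin d) (Fin d) ℂ} (hG : G.IsHermitian) {C : ℝ}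
    (h : ∀ i, hG.eigenvalues i ≤ C) (u : Fin d → ℂ) :
    (star u ⬝ᵥ G *ᵥ u).re ≤ C * ∑ i, ‖u i‖ ^ 2 := by
  set U : Matrix (Fin d) (Fin d) ℂ := (hG.eigenvectorUnitary : Matrix (Fin d) (Fin d) ℂ) with hU
  set w : Fin d → ℂ := (star U) *ᵥ u with hw
  have hsw : star w = star u ᵥ* U := by
    rw [hw, star_mulVec, star_eq_conjTranspose, conjTranspose_conjTranspose]
  have key : star u ⬝ᵥ G *ᵥ u = ∑ i, (hG.eigenvalues i : ℂ) * Complex.normSq (w i) := by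
    conv_lhs => rw [hG.spectral_theorem, Unitary.conjStarAlgAut_apply]
    rw [← hU, ← mulVec_mulVec, ← mulVec_mulVec, dotProduct_mulVec, ← hsw, ← hw]
    simp only [dotProduct, Pi.star_apply, mulVec_diagonal, Function.comp_apply]
    exact Finset.sum_congr rfl fun i _ => by
      rw [Complex.normSq_eq_conj_mul_self, RCLike.star_def, mul_left_comm]; norm_cast
  have hnorm : ∑ i, Complex.normSq (w i) = ∑ i, ‖u i‖ ^ 2 := by
    have h1 : star w ⬝ᵥ w = star u ⬝ᵥ u := by
      rw [hsw, hw, ← dotProduct_mulVec, mulVec_mulVec,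
        (Matrix.mem_unitaryGroup_iff).mp hG.eigenvectorUnitary.2, one_mulVec]
    have := congrArg Complex.re ((dot_star_self_eq w).symm.trans (h1.trans (dot_star_self_eq u)))
    simpa [Complex.sq_norm] using this
  rw [key, Complex.re_sum]
  simp only [Complex.mul_re, Complex.ofReal_re, Complex.ofReal_im, zero_mul, sub_zero,
    Complex.ofReal_im, mul_zero]
  calc ∑ i, hG.eigenvalues i * Complex.normSq (w i)
      ≤ ∑ i, C * Complex.normSq (w i) :=
        Finset.sum_le_sum fun i _ => mul_le_mul_of_nonneg_right (h i) (Complex.normSq_nonneg _)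
    _ = C * ∑ i, Complex.normSq (w i) := by rw [Finset.mul_sum]
    _ = C * ∑ i, ‖u i‖ ^ 2 := by rw [hnorm]

lemma frame_bound (F : Matrix (Fin d) (Fin N) ℂ) {C : ℝ}
    (hC : ∀ i, (Matrix.isHermitian_mul_conjTranspose_self F).eigenvalues i ≤ C)
    (u : Fin d → ℂ) :
    ∑ n, ‖star u ⬝ᵥ fun i => F i n‖ ^ 2 ≤ C * ∑ i, ‖u i‖ ^ 2 := by
  have h := congrArg Complex.re (frameA F u)
  rw [Complex.ofReal_re] at h
  rw [h]
  exact rayleigh (Matrix.isHermitian_mul_conjTranspose_self F) hC u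

lemma part1_aux (F : Matrix (Fin d) (Fin N) ℂ) (C : ℝ)
    (hC : IsGreatest (Set.range (Matrix.isHermitian_mul_conjTranspose_self F).eigenvalues) C)
    (X : Matrix (Fin d) (Fin d) ℂ) :
    ∑ n, ‖star (fun i => F i n) ⬝ᵥ X.mulVec (fun i => F i n)‖ ≤
      C * ∑ i, Real.sqrt ((Matrix.isHermitian_mul_conjTranspose_self X).eigenvalues i) := by
  obtain ⟨j, hj⟩ := hC.1
  have hC0 : 0 ≤ C := by
    rw [← hj]; exact Matrix.eigenvalues_self_mul_conjTranspose_nonneg F j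
  have hCle : ∀ i, (Matrix.isHermitian_mul_conjTranspose_self F).eigenvalues i ≤ C :=
    fun i => hC.2 ⟨i, rfl⟩
  set hH := Matrix.isHermitian_mul_conjTranspose_self X with hHdef
  set U : Matrix (Fin d) (Fin d) ℂ := (hH.eigenvectorUnitary : Matrix (Fin d) (Fin d) ℂ) with hU
  set W : Matrix (Fin d) (Fin d) ℂ := Xᴴ * U with hW
  have hUUt : U * Uᴴ = 1 :=
    (Matrix.mem_unitaryGroup_iff).mp hH.eigenvectorUnitary.2
  have hX : X = U * Wᴴ := by
    rw [hW, conjTranspose_mul, conjTranspose_conjTranspose, ← mul_assoc, hUUt, one_mul]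
  have hWW : Wᴴ * W = diagonal (RCLike.ofReal ∘ hH.eigenvalues) := by
    rw [hW, conjTranspose_mul, conjTranspose_conjTranspose, ← mul_assoc, mul_assoc Uᴴ X Xᴴ]
    have := hH.conjStarAlgAut_star_eigenvectorUnitary
    rw [Unitary.conjStarAlgAut_star_apply] at this
    exact this
  have hUcol : ∀ k, ∑ i, ‖U i k‖ ^ 2 = 1 := by
    intro k
    have h1 : star (fun i => U i k) ⬝ᵥ (fun i => U i k) = (Uᴴ * U) k k := by
      simp [mul_apply, dotProduct, conjTranspose_apply]
    rw [dot_star_self_eq, show Uᴴ * U = 1 from Unitary.coe_star_mul_self hH.eigenvectorUnitary] at h1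
    have : ((∑ i, ‖U i k‖ ^ 2 : ℝ) : ℂ) = ((1 : ℝ) : ℂ) := by
      rw [h1]; simp
    exact_mod_cast this
  have hWcol : ∀ k, ∑ i, ‖W i k‖ ^ 2 = hH.eigenvalues k := by
    intro k
    have h1 : star (fun i => W i k) ⬝ᵥ (fun i => W i k) = (Wᴴ * W) k k := by
      simp [mul_apply, dotProduct, conjTranspose_apply]
    rw [dot_star_self_eq, hWW, diagonal_apply_eq] at h1
    exact Complex.ofReal_injective h1
  have hdec : ∀ f : Fin d → ℂ, star f ⬝ᵥ X *ᵥ f =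
      ∑ k, starRingEnd ℂ (star (fun i => U i k) ⬝ᵥ f) * (star (fun i => W i k) ⬝ᵥ f) := by
    intro f
    conv_lhs => rw [hX]
    rw [← mulVec_mulVec, dotProduct_mulVec, dotProduct]
    refine Finset.sum_congr rfl fun k _ => ?_
    have e1 : (star f ᵥ* U) k = starRingEnd ℂ (star (fun i => U i k) ⬝ᵥ f) := by
      simp [vecMul, dotProduct, map_sum, mul_comm]
    have e2 : (Wᴴ *ᵥ f) k = star (fun i => W i k) ⬝ᵥ f := by
      simp [mulVec, dotProduct, conjTranspose_apply]
    rw [e1, e2]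
  calc ∑ n, ‖star (fun i => F i n) ⬝ᵥ X *ᵥ (fun i => F i n)‖
      ≤ ∑ n, ∑ k, ‖star (fun i => U i k) ⬝ᵥ (fun i => F i n)‖ *
          ‖star (fun i => W i k) ⬝ᵥ (fun i => F i n)‖ := by
        refine Finset.sum_le_sum fun n _ => ?_
        rw [hdec]
        refine (norm_sum_le _ _).trans_eq ?_
        exact Finset.sum_congr rfl fun k _ => by rw [norm_mul, Complex.norm_conj]
    _ = ∑ k, ∑ n, ‖star (fun i => U i k) ⬝ᵥ (fun i => F i n)‖ *
          ‖star (fun i => W i k) ⬝ᵥ (fun i => F i n)‖ := Finset.sum_comm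
    _ ≤ ∑ k, Real.sqrt (C * 1) * Real.sqrt (C * hH.eigenvalues k) := by
        refine Finset.sum_le_sum fun k _ => ?_
        refine (Real.sum_mul_le_sqrt_mul_sqrt _ _ _).trans ?_
        gcongr
        · exact (frame_bound F hCle _).trans_eq (by rw [hUcol k])
        · exact (frame_bound F hCle _).trans_eq (by rw [hWcol k])
    _ = C * ∑ i, Real.sqrt (hH.eigenvalues i) := by
        rw [Finset.mul_sum]
        refine Finset.sum_congr rfl fun k _ => ?_
        rw [mul_one, Real.sqrt_mul hC0, ← mul_assoc, Real.mul_self_sqrt hC0]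

lemma part2_aux (F : Matrix (Fin d) (Fin N) ℂ) (C : ℝ)
    (hC : IsGreatest (Set.range (Matrix.isHermitian_mul_conjTranspose_self F).eigenvalues) C)
    (v : Fin d → ℂ) (hv1 : ∑ i, ‖v i‖ ^ 2 = 1)
    (hv2 : (F * Fᴴ).mulVec v = (C : ℂ) • v) :
    ∑ n, ‖star (fun i => F i n) ⬝ᵥ
        (Matrix.vecMulVec v (star v)).mulVec (fun i => F i n)‖ =
      C * ∑ i, Real.sqrt ((Matrix.isHermitian_mul_conjTranspose_self
        (Matrix.vecMulVec v (star v))).eigenvalues i) := by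
  set X : Matrix (Fin d) (Fin d) ℂ := vecMulVec v (star v) with hXdef
  have hv1c : star v ⬝ᵥ v = 1 := by
    rw [dot_star_self_eq, hv1, Complex.ofReal_one]
  -- pointwise value of the quadratic form
  have hpt : ∀ f : Fin d → ℂ, star f ⬝ᵥ X *ᵥ f =
      starRingEnd ℂ (star v ⬝ᵥ f) * (star v ⬝ᵥ f) := by
    intro f
    have hcol : ∀ i, (X *ᵥ f) i = v i * (star v ⬝ᵥ f) := by
      intro i
      simp only [hXdef, mulVec, dotProduct, vecMulVec_apply, Pi.star_apply, Finset.mul_sum]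
      exact Finset.sum_congr rfl fun j _ => by ring
    have h2 : star f ⬝ᵥ X *ᵥ f = (star f ⬝ᵥ v) * (star v ⬝ᵥ f) := by
      simp only [dotProduct, Pi.star_apply]
      rw [Finset.sum_mul]
      refine Finset.sum_congr rfl fun i _ => ?_
      rw [hcol i]
      simp only [dotProduct, Pi.star_apply]
      ring
    rw [h2]
    congr 1
    simp [dotProduct, map_sum, mul_comm]
  -- the X-specific algebra
  have hXh : Xᴴ = X := by
    ext i j
    simp only [hXdef, conjTranspose_apply, vecMulVec_apply, Pi.star_apply, star_mul']
    rw [star_star]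
    exact mul_comm _ _
  have hXX : X * X = X := by
    ext i j
    simp only [hXdef, mul_apply, vecMulVec_apply, Pi.star_apply]
    calc ∑ k, v i * star (v k) * (v k * star (v j))
        = (star v ⬝ᵥ v) * (v i * star (v j)) := by
          rw [dotProduct, Finset.sum_mul]
          exact Finset.sum_congr rfl fun k _ => by simp only [Pi.star_apply]; ring
      _ = v i * star (v j) := by rw [hv1c, one_mul]
  have hM : X * Xᴴ = X := by rw [hXh, hXX]
  set hh := Matrix.isHermitian_mul_conjTranspose_self X with hhdef
  have hAA : (X * Xᴴ) * (X * Xᴴ) = X * Xᴴ := by rw [hM, hXX]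
  -- eigenvalues are idempotent
  have heig : ∀ i, hh.eigenvalues i * hh.eigenvalues i = hh.eigenvalues i := by
    intro i
    have h1 := hh.mulVec_eigenvectorBasis i
    have h2 : (X * Xᴴ) *ᵥ ((X * Xᴴ) *ᵥ ⇑(hh.eigenvectorBasis i)) =
        (hh.eigenvalues i * hh.eigenvalues i) • ⇑(hh.eigenvectorBasis i) := by
      rw [h1, mulVec_smul, h1, smul_smul]
    rw [mulVec_mulVec, hAA, h1] at h2
    have h3 : ((hh.eigenvalues i * hh.eigenvalues i) - hh.eigenvalues i) •
        ⇑(hh.eigenvectorBasis i) = 0 := by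
      rw [sub_smul, h2, sub_self]
    have hne : ⇑(hh.eigenvectorBasis i) ≠ 0 := by
      intro h
      have h0 : hh.eigenvectorBasis i = 0 := by
        ext j; exact congrFun h j
      exact hh.eigenvectorBasis.orthonormal.ne_zero i h0
    rcases smul_eq_zero.mp h3 with h | h
    · linarith [sub_eq_zero.mp (by exact_mod_cast h)]
    · exact absurd h hne
  have hsqrt : ∀ i, Real.sqrt (hh.eigenvalues i) = hh.eigenvalues i := by
    intro i
    rcases mul_eq_zero.mp (by rw [mul_sub, mul_one, heig i, sub_self] :
        hh.eigenvalues i * (hh.eigenvalues i - 1) = 0) with h | h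
    · rw [h, Real.sqrt_zero]
    · rw [sub_eq_zero.mp h, Real.sqrt_one]
  -- trace: sum of eigenvalues is 1
  have htr : ∑ i, hh.eigenvalues i = 1 := by
    have h1 : trace (X * Xᴴ) = ∑ i, (hh.eigenvalues i : ℂ) := by
      conv_lhs => rw [hh.spectral_theorem, Unitary.conjStarAlgAut_apply]
      rw [trace_mul_cycle,
        show star ((hh.eigenvectorUnitary : Matrix (Fin d) (Fin d) ℂ)) *
          (hh.eigenvectorUnitary : Matrix (Fin d) (Fin d) ℂ) = 1 from
          Unitary.coe_star_mul_self hh.eigenvectorUnitary, one_mul, trace_diagonal]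
      rfl
    have h2 : trace (X * Xᴴ) = 1 := by
      rw [hM, hXdef, trace]
      simp only [diag_apply, vecMulVec_apply]
      have : ∑ i, v i * star v i = star v ⬝ᵥ v := by
        rw [dotProduct]
        exact Finset.sum_congr rfl fun i _ => by simp [mul_comm]
      rw [this, hv1c]
    have h3 : ((∑ i, hh.eigenvalues i : ℝ) : ℂ) = ((1 : ℝ) : ℂ) := by
      push_cast
      rw [← h1, h2]
    exact_mod_cast h3
  have hnn : ∑ i, Real.sqrt (hh.eigenvalues i) = 1 := by
    rw [Finset.sum_congr rfl fun i _ => hsqrt i, htr]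
  rw [hnn, mul_one]
  -- now compute the LHS
  have hLHS : ∀ n, ‖star (fun i => F i n) ⬝ᵥ X *ᵥ (fun i => F i n)‖ =
      ‖star v ⬝ᵥ fun i => F i n‖ ^ 2 := by
    intro n
    rw [hpt, norm_mul, Complex.norm_conj, sq]
  rw [Finset.sum_congr rfl fun n _ => hLHS n]
  have := congrArg Complex.re (frameA F v)
  rw [Complex.ofReal_re] at this
  rw [this, hv2, dotProduct_smul, hv1c]
  simp

end Helpers

/-- With `C` the largest eigenvalue of `F * Fᴴ` (the upper frame bound),
for every matrix `X` (not necessarily Hermitian), `∑ n |f_n^* X f_n| ≤ C * ‖X‖_*`; moreover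
`C` is optimal: equality holds for `X = v v^*` where `v` is a unit eigenvector of `F * Fᴴ`
for the eigenvalue `C`. -/
theorem sum_abs_quadratic_le_nuclearNorm_and_sharp
    (d N : ℕ) (F : Matrix (Fin d) (Fin N) ℂ) (C : ℝ)
    (hC : IsGreatest (Set.range (Matrix.isHermitian_mul_conjTranspose_self F).eigenvalues) C) :
    (∀ X : Matrix (Fin d) (Fin d) ℂ,
      ∑ n, ‖star (fun i => F i n) ⬝ᵥ X.mulVec (fun i => F i n)‖ ≤
        C * nuclearNorm X) ∧
    (∀ v : Fin d → ℂ, (∑ i, ‖v i‖ ^ 2 = 1) →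
      (F * Fᴴ).mulVec v = (C : ℂ) • v →
      ∑ n, ‖star (fun i => F i n) ⬝ᵥ
          (Matrix.vecMulVec v (star v)).mulVec (fun i => F i n)‖ =
        C * nuclearNorm (Matrix.vecMulVec v (star v))) := by
  constructor
  · exact fun X => part1_aux F C hC X
  · exact fun v hv1 hv2 => part2_aux F C hC v hv1 hv2
end

section
/- Let E: R^n → R be differentiable, (z_k) a sequence, and suppose there exist constants a, b > 0 such that for all k: (i) E(z_k) − E(z_{k+1}) ≥ a‖z_{k+1} − z_k‖², and (ii) ‖∇E(z_{k+1})‖ ≤ b‖z_{k+1} − z_k‖. If E satisfies the Kurdyka–Łojasiewicz inequality at a cluster point ẑ with desingularizing function ψ (concave, differentiable, ψ(0)=0, ψ' > 0, and ψ'(E(z) − E(ẑ))·‖∇E(z)‖ ≥ 1 for z near ẑ with E(z) > E(ẑ)), then Σ_k ‖z_{k+1} − z_k‖ < ∞ and (z_k) converges to ẑ. -/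
open Filter Topology BigOperators

private lemma norm_sub_le_sum_aux {X : Type*} [NormedAddCommGroup X] (w : ℕ → X) (K : ℕ) :
    ∀ m : ℕ, ‖w (K + m) - w K‖ ≤ ∑ i ∈ Finset.range m, ‖w (K + i + 1) - w (K + i)‖ := by
  intro m
  induction m with
  | zero => simp
  | succ m ih =>
    rw [Finset.sum_range_succ]
    show ‖w (K + m + 1) - w K‖ ≤ _
    calc ‖w (K + m + 1) - w K‖
        = ‖(w (K + m + 1) - w (K + m)) + (w (K + m) - w K)‖ := by rw [sub_add_sub_cancel]
      _ ≤ ‖w (K + m + 1) - w (K + m)‖ + ‖w (K + m) - w K‖ := norm_add_le _ _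
      _ ≤ _ := by linarith

/-- abstract convergence of a descent sequence under the Kurdyka–Łojasiewicz
property: sufficient decrease plus a relative error condition on the gradient, together with
the KL inequality at a cluster point, imply finite length and convergence to that point. -/
theorem KL_descent_convergence
    (n : ℕ) (E : EuclideanSpace ℝ (Fin n) → ℝ)
    (hE : Differentiable ℝ E)
    (z : ℕ → EuclideanSpace ℝ (Fin n))
    (a b : ℝ) (ha : 0 < a) (hb : 0 < b)
    (hdec : ∀ k, E (z k) - E (z (k + 1)) ≥ a * ‖z (k + 1) - z k‖ ^ 2)
    (hrel : ∀ k, ‖gradient E (z (k + 1))‖ ≤ b * ‖z (k + 1) - z k‖)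
    (zhat : EuclideanSpace ℝ (Fin n)) (hcluster : MapClusterPt zhat atTop z)
    (ψ : ℝ → ℝ)
    (hψconc : ConcaveOn ℝ (Set.Ici 0) ψ)
    (hψdiff : Differentiable ℝ ψ)
    (hψ0 : ψ 0 = 0)
    (hψ' : ∀ t : ℝ, 0 < deriv ψ t)
    (hKL : ∃ ε : ℝ, 0 < ε ∧ ∀ x : EuclideanSpace ℝ (Fin n), ‖x - zhat‖ < ε →
      E zhat < E x → 1 ≤ deriv ψ (E x - E zhat) * ‖gradient E x‖) :
    (Summable fun k => ‖z (k + 1) - z k‖) ∧ Tendsto z atTop (𝓝 zhat) := by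
  classical
  obtain ⟨φ, hφ, hφt⟩ := TopologicalSpace.FirstCountableTopology.tendsto_subseq hcluster
  set d : ℕ → ℝ := fun k => ‖z (k + 1) - z k‖ with hd
  have hd0 : ∀ k, 0 ≤ d k := fun k => norm_nonneg _
  have hEanti : Antitone fun k => E (z k) := by
    apply antitone_nat_of_succ_le
    intro k
    have h1 := hdec k
    nlinarith [mul_nonneg ha.le (sq_nonneg ‖z (k + 1) - z k‖)]
  have hEφ : Tendsto (fun j => E (z (φ j))) atTop (𝓝 (E zhat)) :=
    (hE.continuous.tendsto zhat).comp hφt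
  have hge : ∀ k, E zhat ≤ E (z k) := by
    intro k
    apply le_of_tendsto hEφ
    filter_upwards [hφ.tendsto_atTop.eventually_ge_atTop k] with j hj
    exact hEanti hj
  set r : ℕ → ℝ := fun k => E (z k) - E zhat with hr
  have hrpos0 : ∀ k, 0 ≤ r k := fun k => sub_nonneg.2 (hge k)
  have hranti : Antitone r := fun i j h => sub_le_sub_right (hEanti h) _
  have hr0 : Tendsto r atTop (𝓝 0) := by
    have hbdd : BddBelow (Set.range r) := ⟨0, by rintro _ ⟨k, rfl⟩; exact hrpos0 k⟩
    have h1 : Tendsto r atTop (𝓝 (⨅ k, r k)) := tendsto_atTop_ciInf hranti hbdd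
    have h2 : Tendsto (fun j => r (φ j)) atTop (𝓝 (⨅ k, r k)) := h1.comp hφ.tendsto_atTop
    have h3 : Tendsto (fun j => r (φ j)) atTop (𝓝 0) := by
      have := hEφ.sub_const (E zhat)
      simpa [hr] using this
    rwa [tendsto_nhds_unique h2 h3] at h1
  by_cases hpos : ∀ k, 0 < r k
  swap
  · -- the sequence is eventually constant
    push_neg at hpos
    obtain ⟨K, hK⟩ := hpos
    have hrK : r K = 0 := le_antisymm hK (hrpos0 K)
    have hconst : ∀ m, K ≤ m → z m = z K := by
      intro m hm
      induction m, hm using Nat.le_induction with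
      | base => rfl
      | succ m hKm ih =>
        have hrm : r m = 0 := by
          simp only [hr] at hrK ⊢
          rw [ih]; exact hrK
        have hdm : d m = 0 := by
          have h1 := hdec m
          have h2 : 0 ≤ r (m + 1) := hrpos0 _
          have h3 : a * d m ^ 2 ≤ 0 := by
            simp only [hr] at hrm h2
            simp only [hd]
            linarith
          have h5 : d m ^ 2 ≤ 0 := by nlinarith
          have h6 : d m ^ 2 = 0 := le_antisymm h5 (sq_nonneg _)
          exact (pow_eq_zero_iff (two_ne_zero)).mp h6
        have hzm : z (m + 1) = z m := by
          have h7 : ‖z (m + 1) - z m‖ = 0 := by simpa only [hd] using hdm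
          exact sub_eq_zero.mp (norm_eq_zero.mp h7)
        rw [hzm, ih]
    have htendK : Tendsto z atTop (𝓝 (z K)) :=
      tendsto_atTop_of_eventually_const (fun i hi => hconst i hi)
    have h1 : Tendsto (fun j => z (φ j)) atTop (𝓝 (z K)) := htendK.comp hφ.tendsto_atTop
    have hz : zhat = z K := tendsto_nhds_unique hφt h1
    constructor
    · apply summable_of_ne_finset_zero (s := Finset.range (K + 1))
      intro k hk
      simp only [Finset.mem_range, not_lt] at hk
      show d k = 0
      simp only [hd]
      rw [hconst (k + 1) (by omega), hconst k (by omega), sub_self, norm_zero]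
    · rw [hz]; exact htendK
  · -- main case: E (z k) > E zhat for all k
    obtain ⟨ε, hε, hKLε⟩ := hKL
    have hψs : StrictMono ψ := strictMono_of_deriv_pos hψ'
    have hψnn : ∀ t : ℝ, 0 ≤ t → 0 ≤ ψ t := by
      intro t ht
      have := hψs.monotone ht
      rwa [hψ0] at this
    have hconcineq : ∀ x y : ℝ, 0 ≤ y → y ≤ x → deriv ψ x * (x - y) ≤ ψ x - ψ y := by
      intro x y hy hyx
      rcases eq_or_lt_of_le hyx with rfl | h
      · simp
      · have hxS : x ∈ Set.Ici (0 : ℝ) := Set.mem_Ici.2 (hy.trans hyx)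
        have hyS : y ∈ Set.Ici (0 : ℝ) := Set.mem_Ici.2 hy
        have hs := hψconc.deriv_le_slope hyS hxS h (hψdiff x)
        rw [slope_def_field] at hs
        exact (le_div_iff₀ (sub_pos.2 h)).1 hs
    -- the key one-step estimate
    have hstep : ∀ k : ℕ, ‖z (k + 1) - zhat‖ < ε →
        2 * d (k + 1) ≤ d k + (b / a) * ψ (r (k + 1)) - (b / a) * ψ (r (k + 1 + 1)) := by
      intro k hball
      have hEgt : E zhat < E (z (k + 1)) := by
        have := hpos (k + 1)
        simp only [hr] at this
        linarith
      have hKL1 : 1 ≤ deriv ψ (r (k + 1)) * ‖gradient E (z (k + 1))‖ := by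
        simpa only [hr] using hKLε (z (k + 1)) hball hEgt
      have hc : 0 < deriv ψ (r (k + 1)) := hψ' _
      have h1 : 1 ≤ deriv ψ (r (k + 1)) * (b * d k) := by
        refine hKL1.trans (mul_le_mul_of_nonneg_left ?_ hc.le)
        simpa only [hd] using hrel k
      have hr2le : r (k + 1 + 1) ≤ r (k + 1) := hranti (Nat.le_succ _)
      have hr2nn : 0 ≤ r (k + 1 + 1) := (hpos _).le
      have h2 : deriv ψ (r (k + 1)) * (r (k + 1) - r (k + 1 + 1))
          ≤ ψ (r (k + 1)) - ψ (r (k + 1 + 1)) := hconcineq _ _ hr2nn hr2le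
      have h3 : a * d (k + 1) ^ 2 ≤ r (k + 1) - r (k + 1 + 1) := by
        have := hdec (k + 1)
        simp only [hr, hd]
        linarith
      have hbdk : 0 ≤ b * d k := mul_nonneg hb.le (hd0 k)
      have key : a * d (k + 1) ^ 2 ≤ (b * d k) * (ψ (r (k + 1)) - ψ (r (k + 1 + 1))) := by
        have e1 : a * d (k + 1) ^ 2 ≤ a * d (k + 1) ^ 2 * (deriv ψ (r (k + 1)) * (b * d k)) :=
          le_mul_of_one_le_right (mul_nonneg ha.le (sq_nonneg _)) h1
        have e3 : deriv ψ (r (k + 1)) * (a * d (k + 1) ^ 2)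
            ≤ deriv ψ (r (k + 1)) * (r (k + 1) - r (k + 1 + 1)) :=
          mul_le_mul_of_nonneg_left h3 hc.le
        calc a * d (k + 1) ^ 2
            ≤ a * d (k + 1) ^ 2 * (deriv ψ (r (k + 1)) * (b * d k)) := e1
          _ = (b * d k) * (deriv ψ (r (k + 1)) * (a * d (k + 1) ^ 2)) := by ring
          _ ≤ (b * d k) * (deriv ψ (r (k + 1)) * (r (k + 1) - r (k + 1 + 1))) :=
              mul_le_mul_of_nonneg_left e3 hbdk
          _ ≤ (b * d k) * (ψ (r (k + 1)) - ψ (r (k + 1 + 1))) :=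
              mul_le_mul_of_nonneg_left h2 hbdk
      have hΔnn : 0 ≤ ψ (r (k + 1)) - ψ (r (k + 1 + 1)) := sub_nonneg.2 (hψs.monotone hr2le)
      have key2 : (a * d (k + 1)) ^ 2
          ≤ (a * d k) * (b * (ψ (r (k + 1)) - ψ (r (k + 1 + 1)))) := by
        nlinarith [mul_le_mul_of_nonneg_left key ha.le]
      have hfin : 2 * (a * d (k + 1)) ≤ a * d k + b * (ψ (r (k + 1)) - ψ (r (k + 1 + 1))) := by
        nlinarith [key2, sq_nonneg (a * d k - b * (ψ (r (k + 1)) - ψ (r (k + 1 + 1)))),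
          add_nonneg (mul_nonneg ha.le (hd0 k)) (mul_nonneg hb.le hΔnn),
          mul_nonneg ha.le (hd0 (k + 1))]
      rw [← sub_nonneg]
      have heq : d k + (b / a) * ψ (r (k + 1)) - (b / a) * ψ (r (k + 1 + 1)) - 2 * d (k + 1)
          = (a * d k + b * (ψ (r (k + 1)) - ψ (r (k + 1 + 1))) - 2 * (a * d (k + 1))) / a := by
        field_simp
        ring
      rw [heq]
      exact div_nonneg (by linarith) ha.le
    -- choose a good starting index K
    have hψr : Tendsto (fun k => ψ (r k)) atTop (𝓝 0) := by
      have := (hψdiff.continuous.tendsto 0).comp hr0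
      simpa [hψ0, Function.comp_def] using this
    have hev1 : ∀ᶠ k in atTop, r k < a * (ε / 16) ^ 2 :=
      hr0.eventually_lt_const (by positivity)
    have hev2 : ∀ᶠ k in atTop, ψ (r k) < a / b * (ε / 8) :=
      hψr.eventually_lt_const (by positivity)
    have hfreq : ∃ᶠ k in atTop, ‖z k - zhat‖ < ε / 4 := by
      rw [frequently_atTop]
      intro N
      obtain ⟨M, hM⟩ := Metric.tendsto_atTop.1 hφt (ε / 4) (by positivity)
      refine ⟨φ (max M N), le_trans (le_max_right M N) (hφ.le_apply), ?_⟩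
      have := hM (max M N) (le_max_left _ _)
      rwa [Function.comp_apply, dist_eq_norm] at this
    obtain ⟨K, ⟨hK1, hK2⟩, hK3⟩ := ((hev1.and hev2).and_frequently hfreq).exists
    have hdK : d K < ε / 16 := by
      have h1 := hdec K
      have h2 : 0 ≤ r (K + 1) := hrpos0 _
      have h3 : a * d K ^ 2 < a * (ε / 16) ^ 2 := by
        simp only [hr] at hK1 h2
        simp only [hd]
        linarith
      have h4 : d K ^ 2 < (ε / 16) ^ 2 := (mul_lt_mul_iff_right₀ ha).mp h3
      exact lt_of_pow_lt_pow_left₀ 2 (by positivity) h4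
    have hψK : (b / a) * ψ (r K) < ε / 8 := by
      calc (b / a) * ψ (r K) < (b / a) * (a / b * (ε / 8)) := by
            exact mul_lt_mul_of_pos_left hK2 (by positivity)
        _ = ε / 8 := by field_simp
    have hψK1 : (b / a) * ψ (r (K + 1)) ≤ (b / a) * ψ (r K) :=
      mul_le_mul_of_nonneg_left (hψs.monotone (hranti (Nat.le_succ K))) (by positivity)
    have hψKnn : 0 ≤ (b / a) * ψ (r (K + 1)) :=
      mul_nonneg (by positivity) (hψnn _ (hrpos0 _))
    -- main induction: iterates stay in the ball and lengths are controlled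
    have main : ∀ m : ℕ, ‖z (K + m) - zhat‖ < ε ∧
        (∑ i ∈ Finset.range m, d (K + 1 + i)) + d (K + m) + (b / a) * ψ (r (K + m + 1))
          ≤ d K + (b / a) * ψ (r (K + 1)) := by
      intro m
      induction m with
      | zero =>
        constructor
        · exact lt_of_lt_of_le hK3 (by linarith)
        · simp
      | succ m ih =>
        obtain ⟨ihb, ihT⟩ := ih
        have hSnn : 0 ≤ d (K + m) := hd0 _
        have hψmnn : 0 ≤ (b / a) * ψ (r (K + m + 1)) :=
          mul_nonneg (by positivity) (hψnn _ (hrpos0 _))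
        have hSle : (∑ i ∈ Finset.range m, d (K + 1 + i))
            ≤ d K + (b / a) * ψ (r (K + 1)) := by linarith
        have htri : ‖z (K + (m + 1)) - z K‖
            ≤ ∑ i ∈ Finset.range (m + 1), d (K + i) := by
          have h := norm_sub_le_sum_aux z K (m + 1)
          refine h.trans (le_of_eq ?_)
          refine Finset.sum_congr rfl fun i _ => ?_
          simp only [hd]
        have e1 : ∑ i ∈ Finset.range (m + 1), d (K + i)
            = d K + ∑ i ∈ Finset.range m, d (K + 1 + i) := by
          rw [Finset.sum_range_succ', add_comm]
          congr 1
          exact Finset.sum_congr rfl fun i _ => by congr 1; omega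
        have hball : ‖z (K + (m + 1)) - zhat‖ < ε := by
          have htr2 : ‖z (K + (m + 1)) - zhat‖
              ≤ ‖z (K + (m + 1)) - z K‖ + ‖z K - zhat‖ := by
            have := dist_triangle (z (K + (m + 1))) (z K) zhat
            simpa [dist_eq_norm] using this
          have := htri.trans (le_of_eq e1)
          linarith
        refine ⟨hball, ?_⟩
        have hst := hstep (K + m) hball
        show (∑ i ∈ Finset.range (m + 1), d (K + 1 + i)) + d (K + m + 1)
            + (b / a) * ψ (r (K + m + 1 + 1)) ≤ d K + (b / a) * ψ (r (K + 1))
        rw [Finset.sum_range_succ]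
        have hidx : K + 1 + m = K + m + 1 := by omega
        rw [hidx]
        linarith
    -- summability
    have hsum : Summable d := by
      rw [← summable_nat_add_iff (K + 1)]
      apply summable_of_sum_range_le (c := d K + (b / a) * ψ (r (K + 1))) (fun _ => hd0 _)
      intro m
      have hT := (main m).2
      have hψmnn : 0 ≤ (b / a) * ψ (r (K + m + 1)) :=
        mul_nonneg (by positivity) (hψnn _ (hrpos0 _))
      calc ∑ i ∈ Finset.range m, d (i + (K + 1))
          = ∑ i ∈ Finset.range m, d (K + 1 + i) :=
            Finset.sum_congr rfl fun i _ => by rw [Nat.add_comm]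
        _ ≤ d K + (b / a) * ψ (r (K + 1)) := by linarith [hd0 (K + m)]
    have hcauchy : CauchySeq z := by
      apply cauchySeq_of_summable_dist
      exact hsum.congr fun k => (dist_eq_norm' (z k) (z (k + 1))).symm
    obtain ⟨w, hw⟩ := cauchySeq_tendsto_of_complete hcauchy
    have hzw : zhat = w := tendsto_nhds_unique hφt (hw.comp hφ.tendsto_atTop)
    exact ⟨hsum, hzw ▸ hw⟩
end
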